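/- arXiv:2305.07274 — 2 statements merged into one kernel-verified Lean document; each statement's English description precedes it below -/
import Mathlib

section
/- For every positive integer n and every integer T, the number A(n,T) of quaternary words of length n with synthesis time at most T equals the number of tuples (d_1,…,d_n) ∈ {1,2,3,4}^n with d_1 + ⋯ + d_n ≤ T. -/
/-!
Scan the alternating sequence greedily: if the previous symbol of `x` was matched at a position
carrying symbol `p`, the next symbol `c` is matched exactly `mods4 (c - p)` positions later. Hence
the synthesis time of a quaternary word is the sum of its differential word. Taking differences
modulo 4 is a bijection on quaternary words of length `n` (its inverse takes partial sums), so it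
carries `W n T` onto the quaternary words of length `n` with sum at most `T`, i.e. onto the tuples.
-/

/-- A list of integers is quaternary if all entries lie in {1,2,3,4}. -/
def IsQ (x : List ℤ) : Prop := ∀ a ∈ x, 1 ≤ a ∧ a ≤ 4

/-- The alternating quaternary supersequence 1,2,3,4,1,2,3,4,... of length `T`. -/
def altSeq (T : ℕ) : List ℤ := (List.range T).map (fun i => ((i % 4 : ℕ) : ℤ) + 1)

/-- The synthesis time of `x`: the least `T` such that `x` is a subsequence of `altSeq T`. -/
noncomputable def synTime (x : List ℤ) : ℕ := sInf {T : ℕ | x.Sublist (altSeq T)}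

/-- The shifted modulo: the unique element of {1,2,3,4} congruent to `a` mod 4. -/
def mods4 (a : ℤ) : ℤ := (a - 1) % 4 + 1

/-- The differential word of `x`. -/
def diffWord (x : List ℤ) : List ℤ := List.zipWith (fun p c => mods4 (c - p)) (0 :: x) x

/-- The set of quaternary words of length `n` with synthesis time at most `T`. -/
def W (n : ℕ) (T : ℤ) : Set (List ℤ) :=
  {x | x.length = n ∧ IsQ x ∧ (synTime x : ℤ) ≤ T}

/-- `A n T` is the number of quaternary words of length `n` with synthesis time at most `T`. -/
noncomputable def A (n : ℕ) (T : ℤ) : ℕ := (W n T).ncard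

/-- The single-indel ball of `x`. -/
def ball (x : List ℤ) : Set (List ℤ) :=
  {y | y = x ∨ (y.length + 1 = x.length ∧ y.Sublist x) ∨
       (x.length + 1 = y.length ∧ IsQ y ∧ x.Sublist y)}

/-- The auxiliary binary sequence of `x` (as 0/1 naturals). -/
def auxSeq (x : List ℤ) : List ℕ :=
  List.zipWith (fun a b => if a ≤ b then 1 else 0) x x.tail

/-- VT syndrome of a binary word: `∑ i·w_i` with positions starting from 1. -/
def vtSyn (w : List ℕ) : ℕ := ∑ i ∈ Finset.range w.length, (i + 1) * w.getD i 0

/-- The quaternary VT code. -/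
def VTn (n : ℕ) (a : ZMod n) (b : ZMod 4) : Set (List ℤ) :=
  {x | x.length = n ∧ IsQ x ∧ ((vtSyn (auxSeq x) : ℕ) : ZMod n) = a ∧
       ((x.sum : ℤ) : ZMod 4) = b}

/-- The quaternary VT code with synthesis time constraint. -/
def VTnT (n : ℕ) (a : ZMod n) (b : ZMod 4) (T : ℤ) : Set (List ℤ) :=
  {x ∈ VTn n a b | (synTime x : ℤ) ≤ T}

lemma one_le_mods4 (a : ℤ) : 1 ≤ mods4 a := by unfold mods4; omega

lemma mods4_le_four (a : ℤ) : mods4 a ≤ 4 := by unfold mods4; omega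

lemma mods4_eq_of_dvd_sub {a b : ℤ} (h : 4 ∣ a - b) : mods4 a = mods4 b := by
  unfold mods4; omega

def diffFrom : ℤ → List ℤ → List ℤ
  | _, [] => []
  | p, c :: x => mods4 (c - p) :: diffFrom c x

def integrateFrom : ℤ → List ℤ → List ℤ
  | _, [] => []
  | p, m :: d => mods4 (p + m) :: integrateFrom (mods4 (p + m)) d

lemma diffWord_eq_diffFrom (x : List ℤ) : diffWord x = diffFrom 0 x := by
  suffices ∀ p, List.zipWith (fun p c => mods4 (c - p)) (p :: x) x = diffFrom p x from this 0
  induction x with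
  | nil => simp [diffFrom]
  | cons c x ih => intro p; simp [diffFrom, ← ih c]

lemma length_diffFrom (p : ℤ) (x : List ℤ) : (diffFrom p x).length = x.length := by
  induction x generalizing p <;> simp [diffFrom, *]

lemma length_integrateFrom (p : ℤ) (d : List ℤ) : (integrateFrom p d).length = d.length := by
  induction d generalizing p <;> simp [integrateFrom, *]

lemma isQ_diffFrom (p : ℤ) (x : List ℤ) : IsQ (diffFrom p x) := by
  induction x generalizing p with
  | nil => simp [IsQ, diffFrom]
  | cons c x ih => simpa [IsQ, diffFrom, one_le_mods4, mods4_le_four] using ih c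

lemma isQ_integrateFrom (p : ℤ) (d : List ℤ) : IsQ (integrateFrom p d) := by
  induction d generalizing p with
  | nil => simp [IsQ, integrateFrom]
  | cons m d ih => simpa [IsQ, integrateFrom, one_le_mods4, mods4_le_four] using ih _

lemma diffFrom_congr {p q : ℤ} (h : 4 ∣ p - q) (x : List ℤ) :
    diffFrom p x = diffFrom q x := by
  cases x with
  | nil => rfl
  | cons c x => simp only [diffFrom, mods4_eq_of_dvd_sub (by omega : 4 ∣ (c - p) - (c - q))]

lemma diffFrom_integrateFrom (p : ℤ) {d : List ℤ} (hd : IsQ d) :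
    diffFrom p (integrateFrom p d) = d := by
  induction d generalizing p with
  | nil => rfl
  | cons m d ih =>
    have hm := hd m List.mem_cons_self
    have hhead : mods4 (mods4 (p + m) - p) = m := by unfold mods4; omega
    simp only [integrateFrom, diffFrom, hhead,
      ih _ (fun a ha => hd a (List.mem_cons_of_mem _ ha))]

lemma integrateFrom_diffFrom (p : ℤ) {x : List ℤ} (hx : IsQ x) :
    integrateFrom p (diffFrom p x) = x := by
  induction x generalizing p with
  | nil => rfl
  | cons c x ih =>
    have hc := hx c List.mem_cons_self
    have hhead : mods4 (p + mods4 (c - p)) = c := by unfold mods4; omega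
    simp only [diffFrom, integrateFrom, hhead,
      ih _ (fun a ha => hx a (List.mem_cons_of_mem _ ha))]

lemma sum_diffFrom_nonneg (p : ℤ) (x : List ℤ) : 0 ≤ (diffFrom p x).sum :=
  List.sum_nonneg fun a ha => (zero_le_one.trans (isQ_diffFrom p x a ha).1)

/-- The alternating sequence continued after the symbol `p`. -/
def altSeqFrom (p : ℤ) (T : ℕ) : List ℤ := (List.range T).map fun i : ℕ => mods4 (p + i + 1)

lemma altSeq_eq_altSeqFrom (T : ℕ) : altSeq T = altSeqFrom 0 T := by
  simp only [altSeq, altSeqFrom, mods4]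
  refine List.map_congr_left fun i _ => ?_
  omega

lemma altSeqFrom_succ (p : ℤ) (T : ℕ) :
    altSeqFrom p (T + 1) = mods4 (p + 1) :: altSeqFrom (p + 1) T := by
  simp only [altSeqFrom, List.range_succ_eq_map, List.map_cons, List.map_map]
  congr 1
  · simp
  · refine List.map_congr_left fun i _ => ?_
    simp only [Function.comp_apply]
    push_cast
    ring_nf

lemma sublist_altSeqFrom_iff {x : List ℤ} (hx : IsQ x) (p : ℤ) (T : ℕ) :
    x.Sublist (altSeqFrom p T) ↔ (diffFrom p x).sum ≤ T := by
  induction T generalizing p x with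
  | zero =>
    cases x with
    | nil => simp [altSeqFrom, diffFrom]
    | cons c x =>
      have := sum_diffFrom_nonneg c x
      have := one_le_mods4 (c - p)
      simp only [altSeqFrom, List.range_zero, List.map_nil, List.sublist_nil, reduceCtorEq,
        diffFrom, List.sum_cons, CharP.cast_eq_zero, false_iff, not_le]
      omega
  | succ T ih =>
    rw [altSeqFrom_succ]
    cases x with
    | nil => simpa [diffFrom] using Int.natCast_nonneg (T + 1)
    | cons c x =>
      have hc := hx c List.mem_cons_self
      have htail : IsQ x := fun a ha => hx a (List.mem_cons_of_mem _ ha)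
      by_cases hca : c = mods4 (p + 1)
      · have hstep : mods4 (c - p) = 1 := by unfold mods4 at hca ⊢; omega
        rw [← hca, List.cons_sublist_cons, ih htail, diffFrom, List.sum_cons, hstep,
          diffFrom_congr (by unfold mods4 at hca; omega : 4 ∣ c - (p + 1))]
        push_cast
        omega
      · have hstep : mods4 (c - p) = mods4 (c - (p + 1)) + 1 := by
          unfold mods4 at hca ⊢; omega
        rw [List.sublist_cons_iff, ih hx, diffFrom, diffFrom, List.sum_cons, List.sum_cons, hstep]
        push_cast
        simp only [List.cons.injEq, hca, false_and, exists_false, or_false]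
        omega

lemma synTime_eq_sum_diffWord {x : List ℤ} (hx : IsQ x) :
    (synTime x : ℤ) = (diffWord x).sum := by
  have hset : {T : ℕ | x.Sublist (altSeq T)} = Set.Ici (diffWord x).sum.toNat := by
    ext T
    rw [Set.mem_ofPred_eq, altSeq_eq_altSeqFrom, sublist_altSeqFrom_iff hx,
      ← diffWord_eq_diffFrom, Set.mem_Ici, Int.toNat_le]
  rw [synTime, hset, csInf_Ici,
    Int.toNat_of_nonneg (diffWord_eq_diffFrom x ▸ sum_diffFrom_nonneg 0 x)]

lemma ncard_setOf_diffWord (n : ℕ) (P : List ℤ → Prop) :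
    {x | x.length = n ∧ IsQ x ∧ P (diffWord x)}.ncard =
      {d | d.length = n ∧ IsQ d ∧ P d}.ncard := by
  simp only [diffWord_eq_diffFrom]
  refine Set.ncard_congr (fun x _ => diffFrom 0 x) ?_ ?_ ?_
  · rintro x ⟨hlen, -, hP⟩
    exact ⟨(length_diffFrom 0 x).trans hlen, isQ_diffFrom 0 x, hP⟩
  · rintro x y ⟨-, hx, -⟩ ⟨-, hy, -⟩ h
    rw [← integrateFrom_diffFrom 0 hx, ← integrateFrom_diffFrom 0 hy, h]
  · rintro d ⟨hlen, hd, hP⟩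
    refine ⟨integrateFrom 0 d,
      ⟨(length_integrateFrom 0 d).trans hlen, isQ_integrateFrom 0 d, ?_⟩,
      diffFrom_integrateFrom 0 hd⟩
    rwa [diffFrom_integrateFrom 0 hd]

lemma ncard_setOf_ofFn {α : Type*} (n : ℕ) (P : List α → Prop) :
    {d : Fin n → α | P (List.ofFn d)}.ncard = {l | l.length = n ∧ P l}.ncard := by
  refine Set.ncard_congr (fun d _ => List.ofFn d) (fun d hd => ⟨List.length_ofFn, hd⟩)
    (fun _ _ _ _ h => List.ofFn_injective h) ?_
  rintro l ⟨rfl, hl⟩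
  exact ⟨fun i => l[i], by simpa using hl, List.ofFn_getElem⟩

theorem A_eq_card_tuples_general (n : ℕ) (T : ℤ) :
    A n T =
      {d : Fin n → ℤ | (∀ i, 1 ≤ d i ∧ d i ≤ 4) ∧ ∑ i, d i ≤ T}.ncard := by
  have hW : W n T = {x | x.length = n ∧ IsQ x ∧ (diffWord x).sum ≤ T} := by
    ext x
    simp only [W, Set.mem_ofPred_eq]
    exact and_congr_right fun _ => and_congr_right fun hx => by
      rw [synTime_eq_sum_diffWord hx]
  have htuples : {d : Fin n → ℤ | (∀ i, 1 ≤ d i ∧ d i ≤ 4) ∧ ∑ i, d i ≤ T} =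
      {d | IsQ (List.ofFn d) ∧ (List.ofFn d).sum ≤ T} := by
    ext d
    simp [IsQ, List.sum_ofFn]
  rw [A, hW, ncard_setOf_diffWord n (fun d => d.sum ≤ T), htuples, ncard_setOf_ofFn n
    (fun l => IsQ l ∧ l.sum ≤ T)]

/-- `A n T` equals the number of tuples `(d_1,…,d_n) ∈ {1,2,3,4}^n`
with `d_1 + ⋯ + d_n ≤ T`. -/
theorem A_eq_card_tuples (n : ℕ) (hn : 0 < n) (T : ℤ) :
    A n T =
      {d : Fin n → ℤ | (∀ i, 1 ≤ d i ∧ d i ≤ 4) ∧ ∑ i, d i ≤ T}.ncard :=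
  A_eq_card_tuples_general n T
end

section
/- For every positive integer n, integer T with n < T ≤ 4n, and every a ∈ ℤ_n, b ∈ ℤ_4, the set VT_n(a,b,T) is an (n,T,B)-synthesis code: every x ∈ VT_n(a,b,T) satisfies S(x) ≤ T, and for all distinct x, y ∈ VT_n(a,b,T) we have B(x) ∩ B(y) = ∅. -/
/-!
If the single-indel balls of two distinct words of length `n` meet, one word arises from the
other by moving a single symbol: `x = u c w t` and `y = u w d t` with `w` nonempty. The symbol
sums agree mod 4, so `c = d`. With `m = |u|` and `k = |w|`, the VT syndromes of the auxiliary
sequences differ by `e + (m+1)[c ≤ w₁] - (m+k)[w_k ≤ c] + s + (m+k+1) g`, where `s` counts the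
ascents inside `w` and `e ∈ [-m, m]`, `g ∈ [-1, 1]` are the corrections at the borders of `u`
and `t` (`g = 0` if `t` is empty), each with its sign tied to the adjacent comparison. These ties
keep the difference strictly between `-n` and `n`, so congruence mod `n` makes it vanish, and
that happens only if `c w c` has all its ascents (then `w` is constant `c` and `x = y`) or none
(impossible, as `c w c` starts and ends with `c`).
-/

theorem List.Sublist.exists_eq_append_cons {α : Type*} {z x : List α} (h : z.Sublist x)
    (hl : z.length + 1 = x.length) : ∃ u c t, x = u ++ c :: t ∧ z = u ++ t := by
  induction x generalizing z with
  | nil => simp at hl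
  | cons a x ih =>
    cases h with
    | cons _ h => exact ⟨[], a, x, rfl, h.eq_of_length (by simpa using hl)⟩
    | cons_cons _ h =>
      obtain ⟨u, c, t, rfl, rfl⟩ := ih h (by simpa using hl)
      exact ⟨a :: u, c, t, rfl, rfl⟩

section IsMove

variable {α : Type*}

def IsMove (x y : List α) : Prop :=
  ∃ u w t c d, x = u ++ c :: (w ++ t) ∧ y = u ++ w ++ d :: t

theorem isMove_or_isMove_of_append_eq_append {u₁ t₁ u₂ t₂ : List α} (c d : α)
    (h : u₁ ++ t₁ = u₂ ++ t₂) :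
    IsMove (u₁ ++ c :: t₁) (u₂ ++ d :: t₂) ∨ IsMove (u₂ ++ d :: t₂) (u₁ ++ c :: t₁) := by
  rcases List.append_eq_append_iff.mp h with ⟨w, rfl, rfl⟩ | ⟨w, rfl, rfl⟩
  · exact Or.inl ⟨u₁, w, t₂, c, d, rfl, rfl⟩
  · exact Or.inr ⟨u₂, w, t₁, d, c, rfl, rfl⟩

theorem eq_or_isMove_of_append_cons_eq {u₁ t₁ u₂ t₂ : List α} {c d : α}
    (h : u₁ ++ c :: t₁ = u₂ ++ d :: t₂) :
    u₁ ++ t₁ = u₂ ++ t₂ ∨ IsMove (u₁ ++ t₁) (u₂ ++ t₂) ∨ IsMove (u₂ ++ t₂) (u₁ ++ t₁) := by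
  rcases List.append_eq_append_iff.mp h with ⟨_ | ⟨c', w⟩, rfl, h'⟩ | ⟨_ | ⟨d', w⟩, rfl, h'⟩
  · obtain ⟨-, rfl⟩ := List.cons_eq_cons.mp h'
    simp
  · obtain ⟨rfl, rfl⟩ := List.cons_eq_cons.mp h'
    exact Or.inr (Or.inr ⟨u₁, w, t₂, c, d, by simp, by simp⟩)
  · obtain ⟨-, rfl⟩ := List.cons_eq_cons.mp h'
    simp
  · obtain ⟨rfl, rfl⟩ := List.cons_eq_cons.mp h'
    exact Or.inr (Or.inl ⟨u₂, w, t₁, d, c, by simp, by simp⟩)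

end IsMove

theorem eq_or_isMove_of_mem_ball {x y z : List ℤ} (hlen : x.length = y.length)
    (hx : z ∈ ball x) (hy : z ∈ ball y) : x = y ∨ IsMove x y ∨ IsMove y x := by
  rcases hx with rfl | ⟨hzx, hsx⟩ | ⟨hxz, -, hsx⟩ <;>
    rcases hy with hzy | ⟨hzy, hsy⟩ | ⟨hyz, -, hsy⟩
  all_goals try (subst_vars; omega)
  · exact Or.inl hzy
  · obtain ⟨u₁, c, t₁, rfl, rfl⟩ := hsx.exists_eq_append_cons hzx
    obtain ⟨u₂, d, t₂, rfl, h⟩ := hsy.exists_eq_append_cons hzy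
    exact Or.inr (isMove_or_isMove_of_append_eq_append c d h)
  · obtain ⟨u₁, c, t₁, rfl, rfl⟩ := hsx.exists_eq_append_cons hxz
    obtain ⟨u₂, d, t₂, h, rfl⟩ := hsy.exists_eq_append_cons hyz
    exact eq_or_isMove_of_append_cons_eq h

theorem sum_range_getD_eq_sum (l : List ℕ) :
    ∑ i ∈ Finset.range l.length, l.getD i 0 = l.sum := by
  induction l with
  | nil => simp
  | cons a l ih =>
    simp only [List.length_cons, Finset.sum_range_succ', List.getD_cons_succ,
      List.getD_cons_zero, ih, List.sum_cons]
    omega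

theorem vtSyn_append (l₁ l₂ : List ℕ) :
    vtSyn (l₁ ++ l₂) = vtSyn l₁ + vtSyn l₂ + l₁.length * l₂.sum := by
  simp only [vtSyn, List.length_append, Finset.sum_range_add, ← sum_range_getD_eq_sum l₂,
    Finset.mul_sum]
  rw [add_assoc, ← Finset.sum_add_distrib]
  congr 1
  · refine Finset.sum_congr rfl fun i hi => ?_
    rw [List.getD_append _ _ _ _ (Finset.mem_range.mp hi)]
  · refine Finset.sum_congr rfl fun i _ => ?_
    rw [List.getD_append_right _ _ _ _ (by omega), Nat.add_sub_cancel_left]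
    ring

theorem vtSyn_cons (a : ℕ) (l : List ℕ) : vtSyn (a :: l) = a + vtSyn l + l.sum := by
  simpa [vtSyn] using vtSyn_append [a] l

theorem auxSeq_cons_cons (a b : ℤ) (l : List ℤ) :
    auxSeq (a :: b :: l) = (if a ≤ b then 1 else 0) :: auxSeq (b :: l) := rfl

theorem length_auxSeq (l : List ℤ) : (auxSeq l).length = l.length - 1 := by
  simp [auxSeq]

theorem auxSeq_append_cons (l : List ℤ) (a : ℤ) (r : List ℤ) :
    auxSeq (l ++ a :: r) = auxSeq (l ++ [a]) ++ auxSeq (a :: r) := by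
  induction l with
  | nil => rfl
  | cons x l ih =>
    cases l with
    | nil => rfl
    | cons y l =>
      simp only [List.cons_append, auxSeq_cons_cons] at ih ⊢
      rw [ih]

theorem sum_auxSeq_le : ∀ l : List ℤ, (auxSeq l).sum ≤ l.length - 1
  | [] | [_] => le_rfl
  | a :: b :: l => by
    have := sum_auxSeq_le (b :: l)
    simp only [auxSeq_cons_cons, List.sum_cons, List.length_cons] at this ⊢
    split_ifs <;> omega

theorem isChain_le_of_sum_auxSeq_eq :
    ∀ {l : List ℤ}, (auxSeq l).sum = l.length - 1 → l.IsChain (· ≤ ·)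
  | [], _ => .nil
  | [a], _ => .singleton a
  | a :: b :: l, h => by
    have hle := sum_auxSeq_le (b :: l)
    simp only [auxSeq_cons_cons, List.sum_cons, List.length_cons] at h hle
    split_ifs at h with hab
    · refine .cons_cons hab (isChain_le_of_sum_auxSeq_eq ?_)
      simp only [List.length_cons]
      omega
    · omega

theorem isChain_gt_of_sum_auxSeq_eq_zero :
    ∀ {l : List ℤ}, (auxSeq l).sum = 0 → l.IsChain (· > ·)
  | [], _ => .nil
  | [a], _ => .singleton a
  | a :: b :: l, h => by
    simp only [auxSeq_cons_cons, List.sum_cons] at h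
    split_ifs at h with hab
    · omega
    · exact .cons_cons (lt_of_not_ge hab) (isChain_gt_of_sum_auxSeq_eq_zero (by omega))

theorem vtSyn_auxSeq_append_cons (l : List ℤ) (a : ℤ) (r : List ℤ) :
    vtSyn (auxSeq (l ++ a :: r)) =
      vtSyn (auxSeq (l ++ [a])) + vtSyn (auxSeq (a :: r)) +
        l.length * (auxSeq (a :: r)).sum := by
  rw [auxSeq_append_cons, vtSyn_append, length_auxSeq]
  simp

theorem sum_auxSeq_append_cons (l : List ℤ) (a : ℤ) (r : List ℤ) :
    (auxSeq (l ++ a :: r)).sum = (auxSeq (l ++ [a])).sum + (auxSeq (a :: r)).sum := by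
  rw [auxSeq_append_cons, List.sum_append]

theorem vtSyn_auxSeq_cons (a : ℤ) : ∀ r : List ℤ,
    vtSyn (auxSeq (a :: r)) = (auxSeq (a :: r)).sum + vtSyn (auxSeq r)
  | [] => rfl
  | b :: r => by rw [auxSeq_cons_cons, vtSyn_cons, List.sum_cons]; ring

theorem vtSyn_auxSeq_append_pair (u : List ℤ) (a h : ℤ) :
    vtSyn (auxSeq (u ++ [a, h])) =
      vtSyn (auxSeq (u ++ [a])) + (u.length + 1) * (if a ≤ h then 1 else 0) := by
  have hnil : vtSyn [] = 0 := rfl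
  rw [vtSyn_auxSeq_append_cons u a [h], auxSeq_cons_cons]
  simp only [show auxSeq [h] = [] from rfl, vtSyn_cons, hnil, List.sum_cons, List.sum_nil]
  ring

theorem vtSyn_auxSeq_concat_mono {u : List ℤ} {h h' : ℤ} (hh : h ≤ h') :
    vtSyn (auxSeq (u ++ [h])) ≤ vtSyn (auxSeq (u ++ [h'])) ∧
      vtSyn (auxSeq (u ++ [h'])) ≤ vtSyn (auxSeq (u ++ [h])) + u.length := by
  rcases u.eq_nil_or_concat' with rfl | ⟨u, a, rfl⟩
  · simp [auxSeq]
  · simp only [List.append_assoc, List.singleton_append, vtSyn_auxSeq_append_pair,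
      List.length_append, List.length_singleton]
    split_ifs <;> omega

theorem vtSyn_auxSeq_concat_sub_bounds (u : List ℤ) (c a : ℤ) :
    let e : ℤ := vtSyn (auxSeq (u ++ [c])) - vtSyn (auxSeq (u ++ [a]))
    (if c ≤ a then 1 else 0 : ℤ) = 0 ∧ 0 ≤ e ∧ e ≤ u.length ∨
      (if c ≤ a then 1 else 0 : ℤ) = 1 ∧ -(u.length : ℤ) ≤ e ∧ e ≤ 0 := by
  intro e
  by_cases hca : c ≤ a
  · have := vtSyn_auxSeq_concat_mono (u := u) hca
    exact Or.inr ⟨if_pos hca, by omega, by omega⟩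
  · have := vtSyn_auxSeq_concat_mono (u := u) (le_of_not_ge hca)
    exact Or.inl ⟨if_neg hca, by omega, by omega⟩

theorem sum_auxSeq_cons_anti {t : List ℤ} {h h' : ℤ} (hh : h ≤ h') :
    (auxSeq (h' :: t)).sum ≤ (auxSeq (h :: t)).sum ∧
      (auxSeq (h :: t)).sum ≤ (auxSeq (h' :: t)).sum + 1 := by
  cases t with
  | nil => simp [auxSeq]
  | cons b t =>
    simp only [auxSeq_cons_cons, List.sum_cons]
    split_ifs <;> omega

theorem sum_auxSeq_cons_sub_bounds (t : List ℤ) (z c : ℤ) :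
    let g : ℤ := (auxSeq (z :: t)).sum - (auxSeq (c :: t)).sum
    (if z ≤ c then 1 else 0 : ℤ) = 0 ∧ -1 ≤ g ∧ g ≤ 0 ∨
      (if z ≤ c then 1 else 0 : ℤ) = 1 ∧ 0 ≤ g ∧ g ≤ 1 := by
  intro g
  by_cases hzc : z ≤ c
  · have := sum_auxSeq_cons_anti (t := t) hzc
    exact Or.inr ⟨if_pos hzc, by omega, by omega⟩
  · have := sum_auxSeq_cons_anti (t := t) (le_of_not_ge hzc)
    exact Or.inl ⟨if_neg hzc, by omega, by omega⟩

theorem vtSyn_auxSeq_move_sub {u w w₁ w₂ t : List ℤ} {c a z : ℤ} (ha : w = a :: w₁)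
    (hz : w = w₂ ++ [z]) :
    (vtSyn (auxSeq (u ++ c :: (w ++ t))) : ℤ) - vtSyn (auxSeq (u ++ w ++ c :: t)) =
      ((vtSyn (auxSeq (u ++ [c])) : ℤ) - vtSyn (auxSeq (u ++ [a]))) +
        (u.length + 1) * (if c ≤ a then 1 else 0) -
        (u.length + w.length) * (if z ≤ c then 1 else 0) +
        (auxSeq w).sum +
        (u.length + w.length + 1) * (((auxSeq (z :: t)).sum : ℤ) - (auxSeq (c :: t)).sum) := by
  have hy : vtSyn (auxSeq (u ++ w ++ c :: t)) = vtSyn (auxSeq (u ++ [a])) +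
      vtSyn (auxSeq (w ++ c :: t)) + u.length * (auxSeq (w ++ c :: t)).sum := by
    rw [List.append_assoc, ha, List.cons_append, vtSyn_auxSeq_append_cons]
  have hScw :
      (auxSeq (c :: (w ++ t))).sum = (if c ≤ a then 1 else 0) + (auxSeq (w ++ t)).sum := by
    rw [ha, List.cons_append, auxSeq_cons_cons, List.sum_cons]
  have hVwt : vtSyn (auxSeq (w ++ t)) = vtSyn (auxSeq w) + vtSyn (auxSeq (z :: t)) +
      w₂.length * (auxSeq (z :: t)).sum := by
    rw [hz, List.append_assoc, List.singleton_append, vtSyn_auxSeq_append_cons]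
  have hSwt : (auxSeq (w ++ t)).sum = (auxSeq w).sum + (auxSeq (z :: t)).sum := by
    rw [hz, List.append_assoc, List.singleton_append, sum_auxSeq_append_cons]
  have hVwc :
      vtSyn (auxSeq (w ++ [c])) = vtSyn (auxSeq w) + w.length * (if z ≤ c then 1 else 0) := by
    rw [hz, List.append_assoc, List.singleton_append, vtSyn_auxSeq_append_pair,
      List.length_append, List.length_singleton]
  have hSwc : (auxSeq (w ++ [c])).sum = (auxSeq w).sum + (if z ≤ c then 1 else 0) := by
    rw [hz, List.append_assoc, List.singleton_append, sum_auxSeq_append_cons]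
    rfl
  rw [hy, vtSyn_auxSeq_append_cons u c, vtSyn_auxSeq_cons c (w ++ t), hScw, hSwt, hVwt,
    vtSyn_auxSeq_append_cons w c, sum_auxSeq_append_cons w c, hVwc, hSwc, vtSyn_auxSeq_cons z,
    vtSyn_auxSeq_cons c t]
  have hw : w.length = w₂.length + 1 := by simp [hz]
  push_cast [hw]
  ring

theorem add_add_eq_zero_or_of_dvd {n m k s e g f₁ f₂ : ℤ} (hs₀ : 0 ≤ s) (hs : s ≤ k - 1)
    (hn : m + k + 1 ≤ n)
    (he : f₁ = 0 ∧ 0 ≤ e ∧ e ≤ m ∨ f₁ = 1 ∧ -m ≤ e ∧ e ≤ 0)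
    (hg : f₂ = 0 ∧ -1 ≤ g ∧ g ≤ 0 ∨ f₂ = 1 ∧ 0 ≤ g ∧ g ≤ 1) (hgn : g = 0 ∨ m + k + 2 ≤ n)
    (hdvd : n ∣ e + (m + 1) * f₁ - (m + k) * f₂ + s + (m + k + 1) * g) :
    f₁ + s + f₂ = 0 ∨ f₁ + s + f₂ = k + 1 := by
  obtain rfl | rfl | rfl : g = -1 ∨ g = 0 ∨ g = 1 := by omega
  all_goals
    rcases he with ⟨rfl, he⟩ | ⟨rfl, he⟩ <;> rcases hg with ⟨rfl, hg⟩ | ⟨rfl, hg⟩ <;>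
    have := Int.eq_zero_of_abs_lt_dvd hdvd (abs_lt.mpr ⟨by omega, by omega⟩) <;>
    omega

theorem sum_auxSeq_eq_zero_or_of_dvd {u w t : List ℤ} {c : ℤ} (hw : w ≠ [])
    (hdvd : ((u ++ c :: (w ++ t)).length : ℤ) ∣
      (vtSyn (auxSeq (u ++ c :: (w ++ t))) : ℤ) - vtSyn (auxSeq (u ++ w ++ c :: t))) :
    (auxSeq (c :: (w ++ [c]))).sum = 0 ∨ (auxSeq (c :: (w ++ [c]))).sum = w.length + 1 := by
  obtain ⟨a, w₁, ha⟩ := List.exists_cons_of_ne_nil hw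
  obtain ⟨w₂, z, hz⟩ := w.eq_nil_or_concat'.resolve_left hw
  have hsum : (auxSeq (c :: (w ++ [c]))).sum =
      (if c ≤ a then 1 else 0) + (auxSeq w).sum + (if z ≤ c then 1 else 0) := by
    rw [ha, List.cons_append, auxSeq_cons_cons, List.sum_cons, ← List.cons_append, ← ha,
      sum_auxSeq_append_cons, hz, List.append_assoc, List.singleton_append,
      sum_auxSeq_append_cons]
    simp [auxSeq]
    omega
  rw [vtSyn_auxSeq_move_sub ha hz] at hdvd
  simp only [List.length_append, List.length_cons, Nat.cast_add, Nat.cast_one] at hdvd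
  have hSw := sum_auxSeq_le w
  have hwlen : 1 ≤ w.length := List.length_pos_iff.mpr hw
  have hgn : ((auxSeq (z :: t)).sum : ℤ) - (auxSeq (c :: t)).sum = 0 ∨
      (u.length : ℤ) + w.length + 2 ≤ u.length + (w.length + t.length + 1) := by
    rcases t with _ | ⟨b, t⟩
    · simp [auxSeq]
    · right; simp only [List.length_cons, Nat.cast_add, Nat.cast_one]; omega
  have key := add_add_eq_zero_or_of_dvd (s := ((auxSeq w).sum : ℤ)) (by omega) (by omega)
    (by omega) (vtSyn_auxSeq_concat_sub_bounds u c a)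
    (sum_auxSeq_cons_sub_bounds t z c) hgn hdvd
  rw [hsum]
  exact_mod_cast key

theorem eq_of_dvd_vtSyn_auxSeq_sub {u w t : List ℤ} {c : ℤ}
    (hdvd : ((u ++ c :: (w ++ t)).length : ℤ) ∣
      (vtSyn (auxSeq (u ++ c :: (w ++ t))) : ℤ) - vtSyn (auxSeq (u ++ w ++ c :: t))) :
    u ++ c :: (w ++ t) = u ++ w ++ c :: t := by
  rcases eq_or_ne w [] with rfl | hw
  · simp
  have hw_const : ∀ b ∈ w, b = c := by
    rcases sum_auxSeq_eq_zero_or_of_dvd hw hdvd with hdesc | hasc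
    · have := (List.pairwise_cons.mp (isChain_gt_of_sum_auxSeq_eq_zero hdesc).pairwise).1 c
      simp at this
    · have hle :=
        (isChain_le_of_sum_auxSeq_eq (l := c :: (w ++ [c])) (by simpa using hasc)).pairwise
      intro b hb
      refine le_antisymm ?_ ((List.pairwise_cons.mp hle).1 b (by simp [hb]))
      rw [← List.cons_append, List.pairwise_append] at hle
      exact hle.2.2 b (List.mem_cons_of_mem c hb) c (List.mem_singleton_self c)
  rw [List.eq_replicate_of_mem hw_const, List.append_assoc, ← List.cons_append,
    ← List.replicate_succ, List.replicate_succ', List.append_assoc, List.singleton_append]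

theorem VTn.eq_of_isMove {n : ℕ} {a : ZMod n} {b : ZMod 4} {x y : List ℤ} (hx : x ∈ VTn n a b)
    (hy : y ∈ VTn n a b) (h : IsMove x y) : x = y := by
  obtain ⟨u, w, t, c, d, rfl, rfl⟩ := h
  obtain ⟨hlen, hxQ, hxa, hxb⟩ := hx
  obtain ⟨-, hyQ, hya, hyb⟩ := hy
  obtain rfl : c = d := by
    have h4 := (ZMod.intCast_eq_intCast_iff_dvd_sub _ _ _).mp (hxb.trans hyb.symm)
    have hsum : (u ++ w ++ d :: t).sum - (u ++ c :: (w ++ t)).sum = d - c := by simp; ring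
    have := hxQ c (by simp)
    have := hyQ d (by simp)
    omega
  apply eq_of_dvd_vtSyn_auxSeq_sub
  rw [hlen, ← ZMod.intCast_eq_intCast_iff_dvd_sub]
  push_cast
  exact hya.trans hxa.symm

theorem VTnT_is_synthesis_code_general (n : ℕ) (T : ℤ) (a : ZMod n) (b : ZMod 4) :
    (∀ x ∈ VTnT n a b T, (synTime x : ℤ) ≤ T) ∧
    (∀ x ∈ VTnT n a b T, ∀ y ∈ VTnT n a b T, x ≠ y → Disjoint (ball x) (ball y)) := by
  refine ⟨fun x hx => hx.2, fun x hx y hy hxy => Set.disjoint_left.mpr fun z hzx hzy => hxy ?_⟩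
  rcases eq_or_isMove_of_mem_ball (hx.1.1.trans hy.1.1.symm) hzx hzy with h | h | h
  · exact h
  · exact VTn.eq_of_isMove hx.1 hy.1 h
  · exact (VTn.eq_of_isMove hy.1 hx.1 h).symm

/-- `VT_n(a,b,T)` is an `(n,T,B)`-synthesis code: every codeword has
synthesis time at most `T` and distinct codewords have disjoint single-indel balls. -/
theorem VTnT_is_synthesis_code (n : ℕ) (hn : 0 < n) (T : ℤ)
    (hT1 : (n : ℤ) < T) (hT2 : T ≤ 4 * n) (a : ZMod n) (b : ZMod 4) :
    (∀ x ∈ VTnT n a b T, (synTime x : ℤ) ≤ T) ∧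
    (∀ x ∈ VTnT n a b T, ∀ y ∈ VTnT n a b T, x ≠ y → Disjoint (ball x) (ball y)) :=
  VTnT_is_synthesis_code_general n T a b
end
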